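/- arXiv:1902.05059 — 2 statements merged into one kernel-verified Lean document; each statement's English description precedes it below -/
import Mathlib

section
/- All solutions ω ∈ ℂ of the TM slab resonance equation e^{2 i n₁ ω a} = −(n₁+1)/(n₁−1), with a > 0 and n₁ > 1 real, have imaginary part equal to −Log((n₁+1)/(n₁−1))/(2 n₁ a), which is strictly negative; in particular every resonance lies in the open lower half-plane. -/
/-! Only the modulus of the resonance equation matters: `|e^{2 i n₁ ω a}| = e^{-2 n₁ a Im ω}` must
equal `μ`, which pins down `Im ω`, and `μ > 1` makes it negative. -/

open Complex

theorem Complex.re_eq_log_norm_of_exp_eq {z w : ℂ} (h : exp z = w) : z.re = Real.log ‖w‖ := by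
  rw [← h, norm_exp, Real.log_exp]

theorem one_lt_add_one_div_sub_one {x : ℝ} (hx : 1 < x) : 1 < (x + 1) / (x - 1) := by
  rw [one_lt_div (by linarith)]
  linarith

theorem norm_neg_add_one_div_sub_one_ofReal {x : ℝ} (hx : 1 < x) :
    ‖-(((x : ℂ) + 1) / ((x : ℂ) - 1))‖ = (x + 1) / (x - 1) := by
  have hcast : ((x : ℂ) + 1) / ((x : ℂ) - 1) = (((x + 1) / (x - 1) : ℝ) : ℂ) := by push_cast; rfl
  rw [norm_neg, hcast, norm_real, Real.norm_of_nonneg (by linarith [one_lt_add_one_div_sub_one hx])]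

theorem re_two_mul_I_mul (n a : ℝ) (ω : ℂ) :
    (2 * I * (n : ℂ) * ω * (a : ℂ)).re = -(2 * n * a * ω.im) := by
  simp only [mul_re, mul_im, re_ofNat, im_ofNat, I_re, I_im, ofReal_re, ofReal_im]
  ring

/-- All TM slab resonances have Im ω = −log μ/(2 n₁ a) < 0, hence lie in the lower half-plane. -/
theorem stmt_3 (a n₁ : ℝ) (ha : 0 < a) (hn : 1 < n₁) (ω : ℂ)
    (hres : Complex.exp (2 * Complex.I * (n₁ : ℂ) * ω * (a : ℂ))
      = -(((n₁ : ℂ) + 1) / ((n₁ : ℂ) - 1))) :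
    ω.im = -Real.log ((n₁ + 1) / (n₁ - 1)) / (2 * n₁ * a) ∧ ω.im < 0 := by
  have hlog := re_eq_log_norm_of_exp_eq hres
  rw [re_two_mul_I_mul, norm_neg_add_one_div_sub_one_ofReal hn] at hlog
  have hscale : 0 < 2 * n₁ * a := by positivity
  have him : ω.im = -Real.log ((n₁ + 1) / (n₁ - 1)) / (2 * n₁ * a) := by
    rw [eq_div_iff hscale.ne', ← hlog]
    ring
  refine ⟨him, him ▸ div_neg_of_neg_of_pos ?_ hscale⟩
  exact neg_neg_of_pos (Real.log_pos (one_lt_add_one_div_sub_one hn))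
end

section
/- The function f(w) = ((1−w)/(1+w))·e^{2w} satisfies |f(w)| < 1 for all real w with 0 < w ≤ 1. -/
/-!
Since `1 - w ≥ 0` on `(0, 1]`, only `(1 - w) e^{2w} < 1 + w` needs proof; dividing by `e^w`, this
says `g(w) = (1 + w) e^{-w} - (1 - w) e^w` is positive. Now `g(0) = 0` and `g'(w) = 2 w sinh w > 0`
for `w > 0`, so `g` is strictly increasing on `[0, ∞)`.
-/

open Real Set

lemma hasDerivAt_one_add_mul_exp_neg_sub_one_sub_mul_exp (x : ℝ) :
    HasDerivAt (fun w => (1 + w) * exp (-w) - (1 - w) * exp w) (2 * x * sinh x) x := by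
  refine ((((hasDerivAt_id x).const_add 1).mul (hasDerivAt_neg x).exp).sub
    (((hasDerivAt_id x).const_sub 1).mul (hasDerivAt_exp x))).congr_deriv ?_
  rw [sinh_eq, id]
  ring

lemma strictMonoOn_one_add_mul_exp_neg_sub_one_sub_mul_exp :
    StrictMonoOn (fun w => (1 + w) * exp (-w) - (1 - w) * exp w) (Ici 0) := by
  refine strictMonoOn_of_deriv_pos (convex_Ici 0) (by fun_prop) fun x hx => ?_
  rw [interior_Ici, mem_Ioi] at hx
  rw [(hasDerivAt_one_add_mul_exp_neg_sub_one_sub_mul_exp x).deriv]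
  have := sinh_pos_iff.mpr hx
  positivity

lemma one_sub_mul_exp_two_mul_lt_one_add {w : ℝ} (hw : 0 < w) :
    (1 - w) * exp (2 * w) < 1 + w := by
  have h := strictMonoOn_one_add_mul_exp_neg_sub_one_sub_mul_exp
    (mem_Ici.mpr le_rfl) (mem_Ici.mpr hw.le) hw
  simp only [add_zero, neg_zero, exp_zero, sub_zero, mul_one, sub_self] at h
  have hgap : (1 - w) * exp w < (1 + w) * exp (-w) := by linarith
  calc (1 - w) * exp (2 * w) = (1 - w) * exp w * exp w := by rw [two_mul, exp_add, mul_assoc]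
    _ < (1 + w) * exp (-w) * exp w := by gcongr
    _ = 1 + w := by rw [mul_assoc, ← exp_add, neg_add_cancel, exp_zero, mul_one]

/-- The contraction f(w) = ((1−w)/(1+w)) e^{2w} satisfies |f(w)| < 1 for 0 < w ≤ 1. -/
theorem stmt_7 (w : ℝ) (h0 : 0 < w) (h1 : w ≤ 1) :
    |((1 - w) / (1 + w)) * Real.exp (2 * w)| < 1 := by
  have hw : 0 < 1 + w := by linarith
  have hnonneg : 0 ≤ (1 - w) / (1 + w) * exp (2 * w) :=
    mul_nonneg (div_nonneg (by linarith) hw.le) (exp_pos _).le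
  rw [abs_of_nonneg hnonneg, div_mul_eq_mul_div, div_lt_one hw]
  exact one_sub_mul_exp_two_mul_lt_one_add h0
end
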